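/- arXiv:1006.1326 — 6 statements merged into one kernel-verified Lean document; each statement's English description precedes it below -/
import Mathlib

section
/- For any odd positive integer k and integers a, b, c, we have 8·∑_{d=1}^{(k-1)/2} cos(2πad/k)·cos(2πbd/k)·cos(2πcd/k) = -4 + k·s, where s is the number of pairs of signs (s_a, s_b) ∈ {±1}² such that c ≡ s_a·a + s_b·b (mod k). -/
open Real

lemma sum_cos_range (k : ℕ) (hk0 : 0 < k) (m : ℤ) :
    ∑ d ∈ Finset.range k, Real.cos (2 * π * m * d / k) =
      if (k : ℤ) ∣ m then (k : ℝ) else 0 := by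
  have hkR : (k : ℝ) ≠ 0 := Nat.cast_ne_zero.mpr hk0.ne'
  have h : ∀ d : ℕ, Real.cos (2 * π * m * d / k)
      = (Complex.exp (((2 * π * m * d / k : ℝ) : ℂ) * Complex.I)).re :=
    fun d => (Complex.exp_ofReal_mul_I_re _).symm
  simp only [h, ← Complex.re_sum]
  have hterm : ∀ d ∈ Finset.range k,
      Complex.exp (((2 * π * m * d / k : ℝ) : ℂ) * Complex.I)
        = (Complex.exp (((2 * π * m / k : ℝ) : ℂ) * Complex.I)) ^ d := by
    intro d _
    rw [← Complex.exp_nat_mul]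
    congr 1
    push_cast
    ring
  rw [Finset.sum_congr rfl hterm]
  set ζ := Complex.exp (((2 * π * m / k : ℝ) : ℂ) * Complex.I) with hζ
  have hkC : (k : ℂ) ≠ 0 := by exact_mod_cast hkR
  by_cases hdvd : (k : ℤ) ∣ m
  · have hζ1 : ζ = 1 := by
      obtain ⟨t, ht⟩ := hdvd
      rw [hζ]
      have : ((2 * π * m / k : ℝ) : ℂ) * Complex.I = (t : ℤ) * (2 * π * Complex.I) := by
        subst ht
        push_cast
        field_simp
      rw [this, Complex.exp_int_mul_two_pi_mul_I]
    simp [hζ1, hdvd]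
  · have hζk : ζ ^ k = 1 := by
      rw [hζ, ← Complex.exp_nat_mul]
      have : (k : ℂ) * (((2 * π * m / k : ℝ) : ℂ) * Complex.I) = (m : ℤ) * (2 * π * Complex.I) := by
        push_cast
        field_simp
      rw [this, Complex.exp_int_mul_two_pi_mul_I]
    have hζ1 : ζ ≠ 1 := by
      intro h1
      rw [hζ, Complex.exp_eq_one_iff] at h1
      obtain ⟨n, hn⟩ := h1
      apply hdvd
      have him := congrArg Complex.im hn
      simp [Complex.mul_im, Complex.mul_re] at him
      -- him : 2 * π * m / k = n * (2 * π)
      have hm : (m : ℝ) = n * k := by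
        field_simp at him
        nlinarith [Real.pi_pos, him]
      exact ⟨n, by rw [mul_comm]; exact_mod_cast hm⟩
    rw [geom_sum_eq hζ1, hζk]
    simp [hdvd]

lemma sum_cos_half (k n : ℕ) (hkn : k = 2 * n + 1) (m : ℤ) :
    2 * ∑ d ∈ Finset.Icc 1 n, Real.cos (2 * π * m * d / k) =
      -1 + (if (k : ℤ) ∣ m then (k : ℝ) else 0) := by
  have hk0 : 0 < k := by omega
  have hkR : (k : ℝ) ≠ 0 := Nat.cast_ne_zero.mpr hk0.ne'
  have hrange : Finset.range k = insert 0 (Finset.Icc 1 (2 * n)) := by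
    ext d; simp [Finset.mem_range, Finset.mem_Icc]; omega
  have hsplit : Finset.Icc 1 (2 * n) = Finset.Icc 1 n ∪ Finset.Icc (n + 1) (2 * n) := by
    ext d; simp [Finset.mem_Icc]; omega
  have hdisj : Disjoint (Finset.Icc 1 n) (Finset.Icc (n + 1) (2 * n)) := by
    simp only [Finset.disjoint_left, Finset.mem_Icc]; omega
  have hrefl : ∑ d ∈ Finset.Icc (n + 1) (2 * n), Real.cos (2 * π * m * d / k)
      = ∑ d ∈ Finset.Icc 1 n, Real.cos (2 * π * m * d / k) := by
    apply Finset.sum_nbij' (i := fun d => k - d) (j := fun d => k - d)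
    · intro d hd; simp only [Finset.mem_Icc] at *; omega
    · intro d hd; simp only [Finset.mem_Icc] at *; omega
    · intro d hd; simp only [Finset.mem_Icc] at *; omega
    · intro d hd; simp only [Finset.mem_Icc] at *; omega
    · intro d hd
      simp only [Finset.mem_Icc] at hd
      have hdk : d ≤ k := by omega
      have hcast : ((k - d : ℕ) : ℝ) = (k : ℝ) - d := by
        push_cast [Nat.cast_sub hdk]; ring
      have harg : 2 * π * m * ((k - d : ℕ) : ℝ) / k = (m : ℝ) * (2 * π) - 2 * π * m * d / k := by
        rw [hcast]; field_simp
      rw [harg]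
      have := Real.cos_int_mul_two_pi_sub (2 * π * m * d / k) m
      simp [this]
  have hfull := sum_cos_range k hk0 m
  rw [hrange, Finset.sum_insert (by simp), hsplit,
    Finset.sum_union hdisj, hrefl] at hfull
  simp only [Nat.cast_zero, mul_zero, zero_div, Real.cos_zero] at hfull
  linarith [hfull]

open Real in
theorem stmt1 (k : ℕ) (hk : Odd k) (hk0 : 0 < k) (a b c : ℤ) :
    (8 : ℝ) * ∑ d ∈ Finset.Icc 1 ((k - 1) / 2),
        Real.cos (2 * π * a * d / k) * Real.cos (2 * π * b * d / k) *
          Real.cos (2 * π * c * d / k)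
      = -4 + (k : ℝ) *
        (((({-1, 1} : Finset ℤ) ×ˢ ({-1, 1} : Finset ℤ)).filter
            (fun p => c % (k : ℤ) = (p.1 * a + p.2 * b) % (k : ℤ))).card : ℝ) := by
  obtain ⟨n, hn⟩ := hk
  have hkn : k = 2 * n + 1 := by omega
  have hn2 : (k - 1) / 2 = n := by omega
  rw [hn2]
  have key : ∀ d : ℕ,
      (8 : ℝ) * (Real.cos (2*π*a*d/k) * Real.cos (2*π*b*d/k) * Real.cos (2*π*c*d/k))
      = 2 * Real.cos (2*π*((a + b - c : ℤ) : ℝ)*d/k)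
        + 2 * Real.cos (2*π*((a + -b - c : ℤ) : ℝ)*d/k)
        + 2 * Real.cos (2*π*((-a + b - c : ℤ) : ℝ)*d/k)
        + 2 * Real.cos (2*π*((-a + -b - c : ℤ) : ℝ)*d/k) := by
    intro d
    set A := 2*π*(a:ℝ)*d/(k:ℝ) with hA
    set B := 2*π*(b:ℝ)*d/(k:ℝ) with hB
    set C := 2*π*(c:ℝ)*d/(k:ℝ) with hC
    have e1 : 2*π*((a + b - c : ℤ) : ℝ)*d/k = (A + B) - C := by
      rw [hA, hB, hC]; push_cast; ring
    have e2 : 2*π*((a + -b - c : ℤ) : ℝ)*d/k = (A - B) - C := by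
      rw [hA, hB, hC]; push_cast; ring
    have e3 : 2*π*((-a + b - c : ℤ) : ℝ)*d/k = (B - A) - C := by
      rw [hA, hB, hC]; push_cast; ring
    have e4 : 2*π*((-a + -b - c : ℤ) : ℝ)*d/k = -((A + B) + C) := by
      rw [hA, hB, hC]; push_cast; ring
    rw [e1, e2, e3, e4]
    simp only [Real.cos_add, Real.cos_sub, Real.sin_add, Real.sin_sub, Real.cos_neg]
    ring
  rw [Finset.mul_sum, Finset.sum_congr rfl (fun d _ => key d)]
  simp only [Finset.sum_add_distrib, ← Finset.mul_sum]
  rw [sum_cos_half k n hkn (a + b - c), sum_cos_half k n hkn (a + -b - c),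
    sum_cos_half k n hkn (-a + b - c), sum_cos_half k n hkn (-a + -b - c)]
  have hprod : (({-1, 1} : Finset ℤ) ×ˢ ({-1, 1} : Finset ℤ))
      = {((-1 : ℤ), (-1 : ℤ)), (-1, 1), (1, -1), (1, 1)} := by decide
  rw [hprod, Finset.card_filter]
  rw [Finset.sum_insert (by decide), Finset.sum_insert (by decide),
    Finset.sum_insert (by decide), Finset.sum_singleton]
  have hiff : ∀ x : ℤ, (c % (k : ℤ) = x % (k : ℤ)) ↔ ((k : ℤ) ∣ (x - c)) := by
    intro x
    rw [Int.emod_eq_emod_iff_emod_sub_eq_zero, ← Int.dvd_iff_emod_eq_zero, dvd_sub_comm]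
  simp only [hiff, neg_one_mul, one_mul, apply_ite (Nat.cast : ℕ → ℝ), Nat.cast_one,
    Nat.cast_zero, Nat.cast_add]
  split_ifs <;> ring
end

section
/- The Haagerup modular data D⁰Hg_ν has class-4 primary quantum dimensions S_{d_l,0}/S_{0,0} = νδ, class-2 and class-3 quantum dimensions 2 + νδ, class-1 non-vacuum quantum dimension 1 + νδ, and global dimension 1/S_{0,0} = ν(νδ + 2), where δ = (ν+√(ν²+4))/2. -/
/-!
Write `s = √(ν² + 4)`, so that `δ = (ν + s)/2` and `(s - ν)(s + ν) = 4`. Since `s > |ν|`,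
`1 - ν/s = (s - ν)/s` is nonzero, and `1/S₀₀ = 2νs/(s - ν) = νs(s + ν)/2 = ν(νδ + 2)`,
because `s(s + ν)/2 = (ν² + 4 + νs)/2 = νδ + 2`. Every quantum dimension is its
`S`-entry times this global dimension.
-/

namespace HaagerupIzumi

lemma sq_sqrt_sq_add_four (ν : ℝ) : √(ν ^ 2 + 4) ^ 2 = ν ^ 2 + 4 :=
  Real.sq_sqrt (by positivity)

lemma sqrt_sq_add_four_ne_zero (ν : ℝ) : √(ν ^ 2 + 4) ≠ 0 :=
  (Real.sqrt_pos.2 (by positivity)).ne'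

lemma lt_sqrt_sq_add_four (ν : ℝ) : ν < √(ν ^ 2 + 4) :=
  calc ν ≤ |ν| := le_abs_self ν
    _ = √(ν ^ 2) := (Real.sqrt_sq_eq_abs ν).symm
    _ < √(ν ^ 2 + 4) := Real.sqrt_lt_sqrt (sq_nonneg ν) (by linarith)

lemma one_div_vacuum_entry {ν : ℝ} (hν : ν ≠ 0) :
    1 / ((1 - ν / √(ν ^ 2 + 4)) / (2 * ν)) = ν * (ν * ((ν + √(ν ^ 2 + 4)) / 2) + 2) := by
  have hgap : √(ν ^ 2 + 4) - ν ≠ 0 := (sub_pos.2 (lt_sqrt_sq_add_four ν)).ne'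
  have hs0 := sqrt_sq_add_four_ne_zero ν
  field_simp
  linear_combination (-ν) * sq_sqrt_sq_add_four ν

lemma div_vacuum_entry {ν : ℝ} (hν : ν ≠ 0) (x : ℝ) :
    x / ((1 - ν / √(ν ^ 2 + 4)) / (2 * ν)) = x * (ν * (ν * ((ν + √(ν ^ 2 + 4)) / 2) + 2)) := by
  rw [div_eq_mul_one_div, one_div_vacuum_entry hν]

lemma div_vacuum_entry_class_four {ν : ℝ} (hν : ν ≠ 0) :
    (ν / √(ν ^ 2 + 4) / ν) / ((1 - ν / √(ν ^ 2 + 4)) / (2 * ν)) =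
      ν * ((ν + √(ν ^ 2 + 4)) / 2) := by
  have hs0 := sqrt_sq_add_four_ne_zero ν
  rw [div_vacuum_entry hν]
  field_simp
  linear_combination (-1) * sq_sqrt_sq_add_four ν

lemma div_vacuum_entry_class_two {ν : ℝ} (hν : ν ≠ 0) :
    (1 / ν) / ((1 - ν / √(ν ^ 2 + 4)) / (2 * ν)) = 2 + ν * ((ν + √(ν ^ 2 + 4)) / 2) := by
  rw [div_vacuum_entry hν]
  field_simp
  ring

lemma div_vacuum_entry_class_one {ν : ℝ} (hν : ν ≠ 0) :
    ((1 + ν / √(ν ^ 2 + 4)) / (2 * ν)) / ((1 - ν / √(ν ^ 2 + 4)) / (2 * ν)) =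
      1 + ν * ((ν + √(ν ^ 2 + 4)) / 2) := by
  have hs0 := sqrt_sq_add_four_ne_zero ν
  rw [div_vacuum_entry hν]
  field_simp
  linear_combination (-ν) * sq_sqrt_sq_add_four ν

end HaagerupIzumi

open HaagerupIzumi in
theorem stmt5 (n : ℕ) :
    let ν : ℝ := 2 * n + 1
    let μ : ℝ := ν ^ 2 + 4
    let δ : ℝ := (ν + Real.sqrt μ) / 2
    let y : ℝ := ν / Real.sqrt μ
    let S00 : ℝ := (1 - y) / (2 * ν)
    ((y / ν) / S00 = ν * δ) ∧
    ((1 / ν) / S00 = 2 + ν * δ) ∧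
    (((1 + y) / (2 * ν)) / S00 = 1 + ν * δ) ∧
    (1 / S00 = ν * (ν * δ + 2)) := by
  intro ν μ δ y S00
  have hν : ν ≠ 0 := by positivity
  exact ⟨div_vacuum_entry_class_four hν, div_vacuum_entry_class_two hν,
    div_vacuum_entry_class_one hν, one_div_vacuum_entry hν⟩
end

section
/- In the fusion ring of D⁰Hg_ν, the fusion coefficient N_{b, d_l, d_l} = 0 for every 1 ≤ l ≤ m; i.e., the simple-current b acts freely on the class-4 primaries: b·d_l = d_l is never a constituent. -/
/-!
On class 4 the ratio `S_{b,x} / S_{0,x}` is `-1`, and `S_{d_l,x}` vanishes on classes 2 and 3,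
so the Verlinde sum is the class-1 contribution minus `∑_k S_{d_l,d_k}²`. With `y = ν/√μ` the
class-1 contribution is `(y/ν)² ((1+y)/(1-y) + (1-y)/(1+y)) = (ν²+2)/μ`. Writing
`cos² = (1 + cos 2·)/2`, the class-4 sum reduces to a sum of `cos (2π · 2(l+1) j / μ)` over half a
period of the odd modulus `μ = 2m+1`, which is `-1/2` since `μ ∤ 2(l+1)`; hence it is also
`(4/μ)(m/2 - 1/4) = (ν²+2)/μ`.
-/

/-- Index set for the primaries of the Haagerup–Izumi modular data `D⁰Hg_ν`, `ν = 2n+1`: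
class 1 (vacuum `0` and `b`), class 2 (`a_i`, `1 ≤ i ≤ n`), class 3 (`c_{h,j}`),
class 4 (`d_l`, `1 ≤ l ≤ m`, `m = (ν²+3)/2 = 2n²+2n+2`). -/
abbrev HgIdx (n : ℕ) : Type :=
  Fin 2 ⊕ Fin n ⊕ (Fin n × Fin (2 * n + 1)) ⊕ Fin (2 * n ^ 2 + 2 * n + 2)

/-- The S-matrix of the untwisted Haagerup–Izumi modular data `D⁰Hg_ν`. -/
noncomputable def HgS (n : ℕ) : HgIdx n → HgIdx n → ℝ := fun x y =>
  let v : ℝ := 2 * n + 1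
  let sμ : ℝ := Real.sqrt (v ^ 2 + 4)
  let yy : ℝ := v / sμ
  match x, y with
  | .inl s, .inl t => (if s = t then 1 - yy else 1 + yy) / (2 * v)
  | .inl _, .inr (.inl _) => 1 / v
  | .inl _, .inr (.inr (.inl _)) => 1 / v
  | .inl s, .inr (.inr (.inr _)) => (if s = 0 then yy else -yy) / v
  | .inr (.inl _), .inl _ => 1 / v
  | .inr (.inr (.inl _)), .inl _ => 1 / v
  | .inr (.inr (.inr _)), .inl s => (if s = 0 then yy else -yy) / v
  | .inr (.inl _), .inr (.inl _) => 2 / v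
  | .inr (.inl i), .inr (.inr (.inl hj)) =>
      2 * Real.cos (2 * Real.pi * (i.1 + 1) * (hj.1.1 + 1) / v) / v
  | .inr (.inr (.inl hj)), .inr (.inl i) =>
      2 * Real.cos (2 * Real.pi * (i.1 + 1) * (hj.1.1 + 1) / v) / v
  | .inr (.inl _), .inr (.inr (.inr _)) => 0
  | .inr (.inr (.inr _)), .inr (.inl _) => 0
  | .inr (.inr (.inl hj)), .inr (.inr (.inl hj')) =>
      2 * Real.cos (2 * Real.pi *
        ((hj.1.1 + 1) * hj'.2.1 + (hj'.1.1 + 1) * hj.2.1) / v) / v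
  | .inr (.inr (.inl _)), .inr (.inr (.inr _)) => 0
  | .inr (.inr (.inr _)), .inr (.inr (.inl _)) => 0
  | .inr (.inr (.inr l)), .inr (.inr (.inr l')) =>
      -(2 / sμ) * Real.cos (2 * Real.pi * (l.1 + 1) * (l'.1 + 1) / (v ^ 2 + 4))

open Finset Real

lemma sum_range_cos_two_pi_mul_div_eq_zero {M k : ℕ} (hk : ¬ M ∣ k) :
    ∑ j ∈ range M, cos (2 * π * k * j / M) = 0 := by
  rcases Nat.eq_zero_or_pos M with rfl | hM
  · simp
  set ζ := Complex.exp (2 * π * Complex.I / M)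
  have hζ : IsPrimitiveRoot ζ M := Complex.isPrimitiveRoot_exp M hM.ne'
  have hζk : ζ ^ k ≠ 1 := fun h => hk ((hζ.pow_eq_one_iff_dvd k).mp h)
  have hgeom : ∑ j ∈ range M, (ζ ^ k) ^ j = 0 := by
    rw [geom_sum_eq hζk, ← pow_mul, mul_comm, pow_mul, hζ.pow_eq_one, one_pow, sub_self,
      zero_div]
  have hre (j : ℕ) : ((ζ ^ k) ^ j).re = cos (2 * π * k * j / M) := by
    rw [← pow_mul, ← Complex.exp_nat_mul, ← Complex.exp_ofReal_mul_I_re]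
    congr 2
    push_cast
    ring
  simpa [Complex.re_sum, hre] using congrArg Complex.re hgeom

-- The full period sums to `0`, and `j ↦ 2m+1-j` pairs its nonzero indices into two copies of this sum.
lemma sum_range_cos_two_pi_mul_succ_div_eq {m k : ℕ} (hk : ¬ 2 * m + 1 ∣ k) :
    ∑ j ∈ range m, cos (2 * π * k * (j + 1) / (2 * m + 1)) = -1 / 2 := by
  set g : ℕ → ℝ := fun j => cos (2 * π * k * j / (2 * m + 1 : ℕ))
  have hsymm {i : ℕ} (hi : i ≤ 2 * m + 1) : g (2 * m + 1 - i) = g i := by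
    simp only [g]
    rw [← cos_int_mul_two_pi_sub _ k, Nat.cast_sub hi]
    congr 1
    field_simp
    push_cast
    ring
  have hupper : ∑ j ∈ range m, g (m + j + 1) = ∑ j ∈ range m, g (j + 1) := by
    rw [← sum_range_reflect (fun j => g (j + 1)) m]
    refine sum_congr rfl fun j hj => ?_
    have hjm : j < m := mem_range.mp hj
    rw [← hsymm (by omega)]
    congr 1
    omega
  have hfull : ∑ j ∈ range (2 * m + 1), g j = 0 := sum_range_cos_two_pi_mul_div_eq_zero hk
  rw [sum_range_succ', two_mul, sum_range_add, hupper] at hfull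
  have hg0 : g 0 = 1 := by simp [g]
  have hg (j : ℕ) : g (j + 1) = cos (2 * π * k * (j + 1) / (2 * m + 1)) := by simp [g]
  simp only [hg] at hfull
  linarith

lemma sum_range_cos_sq_two_pi_mul_succ_div_eq {m k : ℕ} (hk : ¬ 2 * m + 1 ∣ k) :
    ∑ j ∈ range m, cos (2 * π * k * (j + 1) / (2 * m + 1)) ^ 2 = m / 2 - 1 / 4 := by
  have hodd : Nat.Coprime (2 * m + 1) 2 := (odd_two_mul_add_one m).coprime_two_right
  have h2k : ¬ 2 * m + 1 ∣ 2 * k := fun h => hk (hodd.dvd_of_dvd_mul_left h)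
  have hsum := sum_range_cos_two_pi_mul_succ_div_eq h2k
  push_cast at hsum
  simp only [cos_sq, sum_add_distrib, ← sum_div, sum_const, card_range, nsmul_eq_mul]
  rw [show ∑ j ∈ range m, cos (2 * (2 * π * k * (j + 1) / (2 * m + 1)))
      = ∑ j ∈ range m, cos (2 * π * (2 * k) * (j + 1) / (2 * m + 1)) from
    sum_congr rfl fun _ _ => by ring_nf, hsum]
  ring

section HaagerupIzumi

variable {n : ℕ}

lemma HgS_classFour_classTwo (l : Fin (2 * n ^ 2 + 2 * n + 2)) (i : Fin n) :
    HgS n (.inr (.inr (.inr l))) (.inr (.inl i)) = 0 := rfl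

lemma HgS_classFour_classThree (l : Fin (2 * n ^ 2 + 2 * n + 2)) (hj : Fin n × Fin (2 * n + 1)) :
    HgS n (.inr (.inr (.inr l))) (.inr (.inr (.inl hj))) = 0 := rfl

lemma HgS_one_div_HgS_zero_classFour (k : Fin (2 * n ^ 2 + 2 * n + 2)) :
    HgS n (.inl 1) (.inr (.inr (.inr k))) / HgS n (.inl 0) (.inr (.inr (.inr k))) = -1 := by
  have hν : (0 : ℝ) < 2 * n + 1 := by positivity
  have hs : 0 < √((2 * n + 1 : ℝ) ^ 2 + 4) := by positivity
  simp only [HgS, one_ne_zero, if_false, if_true]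
  field_simp

lemma classOne_fusion_identity {ν s : ℝ} (hν : 0 < ν) (hs : 0 < s) (hs2 : s ^ 2 = ν ^ 2 + 4) :
    (1 + ν / s) / (2 * ν) * (ν / s / ν) * (ν / s / ν) / ((1 - ν / s) / (2 * ν)) +
      (1 - ν / s) / (2 * ν) * (-(ν / s) / ν) * (-(ν / s) / ν) / ((1 + ν / s) / (2 * ν)) =
      (ν ^ 2 + 2) / (ν ^ 2 + 4) := by
  have hνs : s - ν ≠ 0 := by nlinarith
  field_simp
  linear_combination (-(ν ^ 2 + 2) * s ^ 2 - 2 * ν ^ 2) * hs2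

lemma sum_classOne_HgS (l : Fin (2 * n ^ 2 + 2 * n + 2)) :
    ∑ s : Fin 2, HgS n (.inl 1) (.inl s) * HgS n (.inr (.inr (.inr l))) (.inl s) *
        HgS n (.inr (.inr (.inr l))) (.inl s) / HgS n (.inl 0) (.inl s) =
      ((2 * n + 1) ^ 2 + 2) / ((2 * n + 1) ^ 2 + 4) := by
  simp only [Fin.sum_univ_two, HgS, one_ne_zero, zero_ne_one, if_false, if_true]
  exact classOne_fusion_identity (by positivity) (by positivity) (Real.sq_sqrt (by positivity))

lemma sum_classFour_HgS_sq (l : Fin (2 * n ^ 2 + 2 * n + 2)) :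
    ∑ k : Fin (2 * n ^ 2 + 2 * n + 2), HgS n (.inr (.inr (.inr l))) (.inr (.inr (.inr k))) ^ 2 =
      ((2 * n + 1) ^ 2 + 2) / ((2 * n + 1) ^ 2 + 4) := by
  have hμ : (2 * n + 1 : ℝ) ^ 2 + 4 = 2 * (2 * n ^ 2 + 2 * n + 2 : ℕ) + 1 := by push_cast; ring
  have hterm (k : Fin (2 * n ^ 2 + 2 * n + 2)) :
      HgS n (.inr (.inr (.inr l))) (.inr (.inr (.inr k))) ^ 2 =
        4 / ((2 * n + 1) ^ 2 + 4) * cos (2 * π * ((l.1 + 1 : ℕ) : ℝ) * (k + 1) /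
          (2 * (2 * n ^ 2 + 2 * n + 2 : ℕ) + 1)) ^ 2 := by
    simp only [HgS]
    rw [mul_pow, neg_sq, div_pow, Real.sq_sqrt (by positivity), hμ]
    push_cast
    ring
  have hl : ¬ 2 * (2 * n ^ 2 + 2 * n + 2) + 1 ∣ l.1 + 1 :=
    Nat.not_dvd_of_pos_of_lt l.1.succ_pos (by omega)
  rw [Fintype.sum_congr _ _ hterm, ← mul_sum, Fin.sum_univ_eq_sum_range
      (fun k => cos (2 * π * ((l.1 + 1 : ℕ) : ℝ) * (k + 1) / (2 * (2 * n ^ 2 + 2 * n + 2 : ℕ) + 1)) ^ 2),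
    sum_range_cos_sq_two_pi_mul_succ_div_eq hl, hμ]
  field_simp
  push_cast
  ring

end HaagerupIzumi

/-- In `D⁰Hg_ν` the Verlinde fusion coefficient `N_{b,d_l,d_l}` vanishes for every `l`. -/
theorem stmt8 (n : ℕ) (l : Fin (2 * n ^ 2 + 2 * n + 2)) :
    ∑ x : HgIdx n,
        HgS n (Sum.inl 1) x * HgS n (Sum.inr (Sum.inr (Sum.inr l))) x *
          HgS n (Sum.inr (Sum.inr (Sum.inr l))) x / HgS n (Sum.inl 0) x = 0 := by
  have hclassFour : ∑ k : Fin (2 * n ^ 2 + 2 * n + 2),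
      HgS n (.inl 1) (.inr (.inr (.inr k))) * HgS n (.inr (.inr (.inr l))) (.inr (.inr (.inr k))) *
        HgS n (.inr (.inr (.inr l))) (.inr (.inr (.inr k))) / HgS n (.inl 0) (.inr (.inr (.inr k))) =
      -∑ k : Fin (2 * n ^ 2 + 2 * n + 2),
        HgS n (.inr (.inr (.inr l))) (.inr (.inr (.inr k))) ^ 2 := by
    rw [← sum_neg_distrib]
    refine sum_congr rfl fun k _ => ?_
    rw [mul_assoc, mul_div_right_comm, HgS_one_div_HgS_zero_classFour]
    ring
  simp only [Fintype.sum_sum_type, HgS_classFour_classTwo, HgS_classFour_classThree, mul_zero,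
    zero_div, sum_const_zero, zero_add]
  rw [sum_classOne_HgS, hclassFour, sum_classFour_HgS_sq, add_neg_cancel]
end

section
/- In the grafting construction of Proposition 2(c), the self-fusion coefficient of the simple current is N̂_{b,b,b} = 4/(M'−M); hence integrality of fusion coefficients requires M'−M ∈ {1,2,4}. -/
/-- Proposition 2(c): in the graft `Ŝ = [[x₋,x₊,a,a'],[x₊,x₋,a,-a'],[aᵀ,aᵀ,A,0],[a'ᵀ,-a'ᵀ,0,-A']]`
of two ℤ₂-laminated modular data with `x = 1/(2√M)`, `x' = 1/(2√M')`, the Verlinde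
self-fusion coefficient of the simple current `b` is `N̂_{b,b,b} = 4/(M'-M)`. -/
theorem stmt10 (mm mm' : ℕ) (M M' : ℕ) (hM : 0 < M) (hMM : M < M')
    (x x' : ℝ) (hx : x = 1 / (2 * Real.sqrt M)) (hx' : x' = 1 / (2 * Real.sqrt M'))
    (a : Fin mm → ℝ) (a' : Fin mm' → ℝ)
    (ha : ∀ i, 0 < a i) (ha' : ∀ k, 0 < a' k)
    -- unitarity rows of the two original laminated S-matrices
    (hrow : 2 * x ^ 2 + ∑ i, a i ^ 2 = 1 / 2)
    (hrow' : 2 * x' ^ 2 + ∑ k, a' k ^ 2 = 1 / 2) :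
    -- vacuum row and `b` row of the grafted matrix Ŝ
    let vac : Fin 2 ⊕ Fin mm ⊕ Fin mm' → ℝ :=
      Sum.elim (fun s => if s = 0 then x - x' else x + x') (Sum.elim a a')
    let brow : Fin 2 ⊕ Fin mm ⊕ Fin mm' → ℝ :=
      Sum.elim (fun s => if s = 0 then x + x' else x - x') (Sum.elim a (fun k => -a' k))
    ∑ u, brow u * brow u * brow u / vac u = 4 / ((M' : ℝ) - (M : ℝ)) := by
  intro vac brow
  have hM0 : (0:ℝ) < (M:ℝ) := by exact_mod_cast hM
  have hM'0 : (0:ℝ) < (M':ℝ) := by exact_mod_cast hM.trans hMM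
  have hlt : (M:ℝ) < (M':ℝ) := by exact_mod_cast hMM
  have hs : 0 < Real.sqrt M := Real.sqrt_pos.2 hM0
  have hs' : 0 < Real.sqrt M' := Real.sqrt_pos.2 hM'0
  have hs2 : (Real.sqrt M)^2 = (M:ℝ) := Real.sq_sqrt hM0.le
  have hs'2 : (Real.sqrt M')^2 = (M':ℝ) := Real.sq_sqrt hM'0.le
  have hss : Real.sqrt M < Real.sqrt M' := by
    apply Real.sqrt_lt_sqrt hM0.le hlt
  have hx0 : 0 < x := by rw [hx]; positivity
  have hx'0 : 0 < x' := by rw [hx']; positivity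
  have hxx : x' < x := by
    rw [hx, hx']
    apply one_div_lt_one_div_of_lt (by positivity)
    linarith
  have hx2 : x^2 = 1 / (4 * M) := by
    rw [hx]; rw [div_pow, mul_pow, hs2]; norm_num
  have hx'2 : x'^2 = 1 / (4 * M') := by
    rw [hx']; rw [div_pow, mul_pow, hs'2]; norm_num
  have hsum : ∑ u, brow u * brow u * brow u / vac u
      = (x + x')^3 / (x - x') + (x - x')^3 / (x + x')
        + (∑ i, a i ^ 2) - (∑ k, a' k ^ 2) := by
    simp only [vac, brow, Fintype.sum_sum_type, Fin.sum_univ_two, Sum.elim_inl, Sum.elim_inr]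
    norm_num
    have e1 : ∀ i : Fin mm, a i * a i * a i / a i = a i ^ 2 := fun i => by
      field_simp [(ha i).ne']
    have e2 : ∀ k : Fin mm', -(a' k * a' k * a' k) / a' k = -(a' k ^ 2) := fun k => by
      field_simp [(ha' k).ne']
    rw [Finset.sum_congr rfl (fun i _ => e1 i), Finset.sum_congr rfl (fun k _ => e2 k),
      Finset.sum_neg_distrib]
    ring
  rw [hsum]
  have hA : (∑ i, a i ^ 2) = 1/2 - 2 * x^2 := by linarith
  have hA' : (∑ k, a' k ^ 2) = 1/2 - 2 * x'^2 := by linarith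
  rw [hA, hA']
  have hne1 : x - x' ≠ 0 := by linarith
  have hne2 : x + x' ≠ 0 := by positivity
  have hne3 : (M':ℝ) - M ≠ 0 := by linarith
  have key : (x + x')^3 / (x - x') + (x - x')^3 / (x + x')
      = 16 * x^2 * x'^2 / (x^2 - x'^2) + 2 * x^2 - 2 * x'^2 := by
    have : x^2 - x'^2 ≠ 0 := by nlinarith
    field_simp
    ring
  have hpos : x^2 - x'^2 ≠ 0 := by nlinarith
  have h4 : (4:ℝ) * M ≠ 0 := by positivity
  have h4' : (4:ℝ) * M' ≠ 0 := by positivity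
  have key2 : 16 * x^2 * x'^2 / (x^2 - x'^2) = 4 / ((M':ℝ) - M) := by
    rw [div_eq_div_iff hpos hne3, hx2, hx'2]
    field_simp
    ring
  rw [key, key2]
  ring
end

section
/- There is no 3×3 complex matrix solution over Z₃×Z₃ to Izumi's equations: the set A(Z₃×Z₃) is empty. Concretely: there do not exist complex numbers a, u, v with |a| = 1, a³ = 1, and real δ = (9+√85)/2 such that 1 − δ = (conj(a)u + a·conj(u) − 1)·(conj(a)v + a·conj(v) − 1) together with conj(a)u + a·conj(u) = conj(a)v + a·conj(v). -/
open ComplexConjugate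

theorem Complex.im_conj_mul_add_mul_conj (a u : ℂ) : (conj a * u + a * conj u).im = 0 := by
  simp only [add_im, mul_im, conj_re, conj_im]
  ring

theorem Complex.re_mul_self_nonneg_of_im_eq_zero {r : ℂ} (hr : r.im = 0) : 0 ≤ (r * r).re := by
  rw [mul_re, hr, mul_zero, sub_zero]
  exact mul_self_nonneg r.re

theorem stmt12 :
    ¬∃ a u v : ℂ, ‖a‖ = 1 ∧ a ^ 3 = 1 ∧
      (1 : ℂ) - (((9 + Real.sqrt 85) / 2 : ℝ) : ℂ) =
        ((starRingEnd ℂ) a * u + a * (starRingEnd ℂ) u - 1) *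
          ((starRingEnd ℂ) a * v + a * (starRingEnd ℂ) v - 1) ∧
      (starRingEnd ℂ) a * u + a * (starRingEnd ℂ) u =
        (starRingEnd ℂ) a * v + a * (starRingEnd ℂ) v := by
  rintro ⟨a, u, v, -, -, hprod, hsame⟩
  rw [← hsame] at hprod
  have hsquare_nonneg := Complex.re_mul_self_nonneg_of_im_eq_zero
    (r := conj a * u + a * conj u - 1)
    (by rw [Complex.sub_im, Complex.im_conj_mul_add_mul_conj, Complex.one_im, sub_zero])
  rw [← hprod] at hsquare_nonneg
  have hδ : (1 - ((9 + Real.sqrt 85) / 2 : ℝ) : ℂ).re < 0 := by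
    simp only [Complex.sub_re, Complex.one_re, Complex.ofReal_re]
    linarith [Real.sqrt_nonneg 85]
  exact hδ.not_ge hsquare_nonneg
end

section
/- For ν = 2n+1, μ = ν²+4, m = (μ-1)/2, δ = (ν+√μ)/2, the sum of squares of the quantum dimensions of D⁰Hg_ν satisfies 1 + (1+νδ)² + n(2+νδ)² + nν(2+νδ)² + m(νδ)² = (ν(νδ+2))². -/
theorem stmt16 (n : ℕ) :
    let ν : ℝ := 2 * n + 1
    let μ : ℝ := ν ^ 2 + 4
    let δ : ℝ := (ν + Real.sqrt μ) / 2
    let m : ℝ := 2 * n ^ 2 + 2 * n + 2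
    1 + (1 + ν * δ) ^ 2 + n * (1 + ν) * (2 + ν * δ) ^ 2 + m * ν ^ 2 * δ ^ 2
      = ν ^ 2 * (ν * δ + 2) ^ 2 := by
  have h0 : (0:ℝ) ≤ (2 * n + 1) ^ 2 + 4 := by positivity
  have hs : Real.sqrt ((2 * (n:ℝ) + 1) ^ 2 + 4) ^ 2 = (2 * (n:ℝ) + 1) ^ 2 + 4 :=
    Real.sq_sqrt h0
  simp only
  linear_combination ((2 * (n:ℝ) + 1) ^ 2 / 2) * hs
end
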